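/- The sequence of partial products g^{(II)}(u)_n = u·e^{(N−2)γ/N}·[(u+Nħ)(u−(N−1)ħ)]/[(u+ħ)(u−Nħ)]·∏_{l=1}^{n−1}[ (u+Nħ+Nħl)(u−(N−1)ħ−Nħl) / ((u+ħ+Nħl)(u−Nħ−Nħl)) ]·e^{−(N−2)/(Nl)} converges as n→∞ to u·Γ((u+ħ)/(Nħ))Γ(1−u/(Nħ)) / (Γ(1−(u+ħ)/(Nħ))Γ(1+u/(Nħ))). -/

import Mathlib

open Filter Topology Complex

/-- The `n`-th partial product `g^{(II)}(u)_n` appearing in the bosonization of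
type II vertex operators: the product over `l = 1, …, n−1` is written as a
product over `l' = l+1` with `l ∈ range (n−1)`. -/
noncomputable def gII (N : ℕ) (hbar : ℝ) (u : ℂ) (n : ℕ) : ℂ :=
  u * Complex.exp ((((N : ℂ) - 2) * (Real.eulerMascheroniConstant : ℂ)) / N) *
    ((u + N * hbar) * (u - ((N : ℂ) - 1) * hbar)) /
      ((u + hbar) * (u - N * hbar)) *
    ∏ l ∈ Finset.range (n - 1),
      ((u + N * hbar + N * hbar * ((l : ℂ) + 1)) *
          (u - ((N : ℂ) - 1) * hbar - N * hbar * ((l : ℂ) + 1)) /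
        ((u + hbar + N * hbar * ((l : ℂ) + 1)) *
          (u - N * hbar - N * hbar * ((l : ℂ) + 1))) *
        Complex.exp (-(((N : ℂ) - 2) / (N * ((l : ℂ) + 1)))))

set_option maxHeartbeats 1000000 in
/-- The partial products `g^{(II)}(u)_n` converge as `n → ∞` to
`u Γ((u+hbar)/(Nhbar)) Γ(1−u/(Nhbar)) / (Γ(1−(u+hbar)/(Nhbar)) Γ(1+u/(Nhbar)))`. -/
theorem gII_tendsto (N : ℕ) (hN : 2 ≤ N) (hbar : ℝ) (hh : hbar ≠ 0) (u : ℂ)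
    (hu : ∀ n : ℤ, u ≠ (n : ℂ) * hbar) :
    Tendsto (gII N hbar u) atTop
      (𝓝 (u * Complex.Gamma ((u + hbar) / (N * hbar)) *
        Complex.Gamma (1 - u / (N * hbar)) /
        (Complex.Gamma (1 - (u + hbar) / (N * hbar)) *
          Complex.Gamma (1 + u / (N * hbar))))) := by
  have hNnat : (N : ℂ) ≠ 0 := Nat.cast_ne_zero.mpr (by omega)
  have hh' : (hbar : ℂ) ≠ 0 := Complex.ofReal_ne_zero.mpr hh
  obtain ⟨c, hc⟩ : ∃ c : ℂ, c = (N : ℂ) * hbar := ⟨_, rfl⟩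
  rw [← hc]
  have hc0 : c ≠ 0 := by rw [hc]; exact mul_ne_zero hNnat hh'
  obtain ⟨a, ha_def⟩ : ∃ a : ℂ, a = (u + hbar) / c := ⟨_, rfl⟩
  obtain ⟨b, hb_def⟩ : ∃ b : ℂ, b = u / c := ⟨_, rfl⟩
  rw [← ha_def, ← hb_def]
  have hb : u = c * b := by rw [hb_def]; field_simp
  have ha : u + hbar = c * a := by rw [ha_def]; field_simp
  -- `a` and `b` avoid all integers
  have haZ : ∀ m : ℤ, a ≠ (m : ℂ) := by
    intro m hm
    apply hu (N * m - 1)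
    have h1 : u + hbar = c * m := by rw [ha, hm]
    rw [hc] at h1
    push_cast
    linear_combination h1
  have hbZ : ∀ m : ℤ, b ≠ (m : ℂ) := by
    intro m hm
    apply hu (N * m)
    have h1 : u = c * m := by rw [hb, hm]
    rw [hc] at h1
    push_cast
    linear_combination h1
  have hab : (N : ℂ) * (a - b) = 1 := by
    rw [ha_def, hb_def, hc]
    field_simp
    ring
  obtain ⟨w, hw_def⟩ : ∃ w : ℂ, w = 2 * a - 2 * b - 1 := ⟨_, rfl⟩
  have hw : w = (2 - (N : ℂ)) / N := by
    rw [hw_def, eq_div_iff hNnat]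
    linear_combination (2 : ℂ) * hab
  -- nonvanishing of linear factors
  have hfa : ∀ k : ℤ, a + (k : ℂ) ≠ 0 := fun k h => haZ (-k) (by push_cast; linear_combination h)
  have hf1a : ∀ k : ℤ, 1 - a + (k : ℂ) ≠ 0 := fun k h =>
    haZ (k + 1) (by push_cast; linear_combination -h)
  have hf1b : ∀ k : ℤ, 1 - b + (k : ℂ) ≠ 0 := fun k h =>
    hbZ (k + 1) (by push_cast; linear_combination -h)
  have hf1b' : ∀ k : ℤ, 1 + b + (k : ℂ) ≠ 0 := fun k h =>
    hbZ (-k - 1) (by push_cast; linear_combination h)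
  have h1a : (1 : ℂ) - a ≠ 0 := by have := hf1a 0; simpa using this
  have h1b' : (1 : ℂ) + b ≠ 0 := by have := hf1b' 0; simpa using this
  have ha0 : a ≠ 0 := by have := hfa 0; simpa using this
  have h1b : (1 : ℂ) - b ≠ 0 := by have := hf1b 0; simpa using this
  obtain ⟨P, hP⟩ : ∃ P : ℂ → ℕ → ℂ,
      P = fun s m => ∏ j ∈ Finset.range (m + 1), (s + (j : ℂ)) := ⟨_, rfl⟩
  have hPa : ∀ m, P a m ≠ 0 := fun m => by
    rw [hP]
    exact Finset.prod_ne_zero_iff.mpr fun j _ => by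
      have := hfa j; push_cast at this ⊢; exact this
  have hP1a : ∀ m, P (1 - a) m ≠ 0 := fun m => by
    rw [hP]
    exact Finset.prod_ne_zero_iff.mpr fun j _ => by
      have := hf1a j; push_cast at this ⊢; exact this
  have hP1b : ∀ m, P (1 - b) m ≠ 0 := fun m => by
    rw [hP]
    exact Finset.prod_ne_zero_iff.mpr fun j _ => by
      have := hf1b j; push_cast at this ⊢; exact this
  have hPb : ∀ m, P (1 + b) m ≠ 0 := fun m => by
    rw [hP]
    exact Finset.prod_ne_zero_iff.mpr fun j _ => by
      have := hf1b' j; push_cast at this ⊢; exact this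
  -- the finite product identity
  have prodId : ∀ m : ℕ,
      ∏ l ∈ Finset.range m,
        ((1 - a + ((l : ℂ) + 1)) * (1 + b + ((l : ℂ) + 1)) /
          ((a + ((l : ℂ) + 1)) * (1 - b + ((l : ℂ) + 1))))
        = (a * (1 - b)) * (P (1 - a) m * P (1 + b) m) /
            (((1 - a) * (1 + b)) * (P a m * P (1 - b) m)) := by
    intro m
    induction m with
    | zero =>
        simp only [Finset.prod_range_zero, hP, zero_add, Finset.prod_range_one, Nat.cast_zero, add_zero]
        field_simp
    | succ m ih =>
        have e : ∀ s : ℂ, P s (m + 1) = P s m * (s + ((m : ℂ) + 1)) := by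
          intro s
          simp only [hP, Finset.prod_range_succ]
          push_cast
          ring
        have h5 : a + ((m : ℂ) + 1) ≠ 0 := by
          have := hfa ((m : ℤ) + 1); push_cast at this; exact this
        have h6 : 1 - b + ((m : ℂ) + 1) ≠ 0 := by
          have := hf1b ((m : ℤ) + 1); push_cast at this; exact this
        rw [Finset.prod_range_succ, ih, e, e, e, e]
        field_simp [hPa m, hP1b m]
  -- term-by-term rewriting of the gII product
  have termEq : ∀ l : ℕ,
      (u + c + c * ((l : ℂ) + 1)) * (u - ((N : ℂ) - 1) * hbar - c * ((l : ℂ) + 1)) /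
          ((u + hbar + c * ((l : ℂ) + 1)) * (u - c - c * ((l : ℂ) + 1))) *
          Complex.exp (-(((N : ℂ) - 2) / (N * ((l : ℂ) + 1))))
        = (1 - a + ((l : ℂ) + 1)) * (1 + b + ((l : ℂ) + 1)) /
            ((a + ((l : ℂ) + 1)) * (1 - b + ((l : ℂ) + 1))) *
            Complex.exp (w / ((l : ℂ) + 1)) := by
    intro l
    have hl : ((l : ℂ) + 1) ≠ 0 := by
      have : ((l + 1 : ℕ) : ℂ) ≠ 0 := Nat.cast_ne_zero.mpr (Nat.succ_ne_zero l)
      push_cast at this; exact this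
    have e1 : u + c + c * ((l : ℂ) + 1) = c * (1 + b + ((l : ℂ) + 1)) := by
      linear_combination hb
    have e2 : u - ((N : ℂ) - 1) * hbar - c * ((l : ℂ) + 1) = -c * (1 - a + ((l : ℂ) + 1)) := by
      linear_combination ha + hc
    have e3 : u + (hbar : ℂ) + c * ((l : ℂ) + 1) = c * (a + ((l : ℂ) + 1)) := by
      linear_combination ha
    have e4 : u - c - c * ((l : ℂ) + 1) = -c * (1 - b + ((l : ℂ) + 1)) := by
      linear_combination hb
    have h5 : a + ((l : ℂ) + 1) ≠ 0 := by
      have := hfa ((l : ℤ) + 1); push_cast at this; exact this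
    have h6 : 1 - b + ((l : ℂ) + 1) ≠ 0 := by
      have := hf1b ((l : ℤ) + 1); push_cast at this; exact this
    have hexp : Complex.exp (-(((N : ℂ) - 2) / (N * ((l : ℂ) + 1))))
        = Complex.exp (w / ((l : ℂ) + 1)) := by
      congr 1
      rw [hw]
      field_simp
      ring
    rw [e1, e2, e3, e4, hexp]
    congr 1
    field_simp
  -- closed form of the partial products
  have key : ∀ m : ℕ, gII N hbar u (m + 1)
      = u * Complex.exp (-(w * (Real.eulerMascheroniConstant : ℂ))) *
          ((P (1 - a) m * P (1 + b) m) / (P a m * P (1 - b) m)) *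
          Complex.exp (w * ((harmonic m : ℂ))) := by
    intro m
    have hharm : ((harmonic m : ℂ)) = ∑ l ∈ Finset.range m, ((l : ℂ) + 1)⁻¹ := by
      unfold harmonic
      push_cast
      rfl
    have hsum : ∑ l ∈ Finset.range m, w / ((l : ℂ) + 1) = w * ((harmonic m : ℂ)) := by
      rw [hharm, Finset.mul_sum]
      exact Finset.sum_congr rfl fun l _ => div_eq_mul_inv _ _
    have f1 : u + c = c * (1 + b) := by linear_combination hb
    have f2 : u - ((N : ℂ) - 1) * hbar = -c * (1 - a) := by linear_combination ha + hc
    have f3 : u + (hbar : ℂ) = c * a := ha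
    have f4 : u - c = -c * (1 - b) := by linear_combination hb
    have hexpγ : Complex.exp ((((N : ℂ) - 2) * (Real.eulerMascheroniConstant : ℂ)) / N)
        = Complex.exp (-(w * (Real.eulerMascheroniConstant : ℂ))) := by
      congr 1
      rw [hw]
      field_simp
      ring
    simp only [gII, Nat.add_sub_cancel, ← hc]
    rw [Finset.prod_congr rfl fun l _ => termEq l, Finset.prod_mul_distrib,
      ← Complex.exp_sum, hsum, prodId m, f1, f2, f3, f4, hexpγ]
    field_simp [hPa m, hP1b m]
  -- rewrite in terms of GammaSeq
  have key2 : ∀ m : ℕ, 1 ≤ m → gII N hbar u (m + 1)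
      = u * (GammaSeq a m / GammaSeq (1 - a) m) * (GammaSeq (1 - b) m / GammaSeq (1 + b) m) *
          Complex.exp (w * (((harmonic m : ℂ)) - ((Real.log m : ℝ) : ℂ) -
            (Real.eulerMascheroniConstant : ℂ))) := by
    intro m hm
    have hm0 : (m : ℂ) ≠ 0 := Nat.cast_ne_zero.mpr (by omega)
    obtain ⟨L, hL⟩ : ∃ L : ℂ, L = ((Real.log m : ℝ) : ℂ) := ⟨_, rfl⟩
    have hlog : Complex.log (m : ℂ) = L := by
      rw [hL]
      have := Complex.ofReal_log (Nat.cast_nonneg (α := ℝ) m)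
      push_cast at this ⊢
      exact this.symm
    have hGS : ∀ s : ℂ, GammaSeq s m = Complex.exp (L * s) * (m.factorial : ℂ) / P s m := by
      intro s
      rw [Complex.GammaSeq, Complex.cpow_def_of_ne_zero hm0, hlog, hP]
    have hF : (m.factorial : ℂ) ≠ 0 := Nat.cast_ne_zero.mpr m.factorial_ne_zero
    rw [key m, hGS, hGS, hGS, hGS, ← hL]
    have hsplit : Complex.exp (w * (((harmonic m : ℂ)) - L - (Real.eulerMascheroniConstant : ℂ)))
        = Complex.exp (L * (1 - a)) / Complex.exp (L * a) *
          (Complex.exp (L * (1 + b)) / Complex.exp (L * (1 - b))) *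
          (Complex.exp (-(w * (Real.eulerMascheroniConstant : ℂ))) *
            Complex.exp (w * ((harmonic m : ℂ)))) := by
      rw [← Complex.exp_sub, ← Complex.exp_sub, ← Complex.exp_add, ← Complex.exp_add,
        ← Complex.exp_add]
      congr 1
      rw [hw_def]
      ring
    rw [hsplit]
    generalize hX : Complex.exp (L * a) = X
    generalize hY : Complex.exp (L * (1 - a)) = Y
    generalize hZ : Complex.exp (L * (1 - b)) = Z
    generalize hW : Complex.exp (L * (1 + b)) = W
    generalize hE : Complex.exp (-(w * (Real.eulerMascheroniConstant : ℂ))) = E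
    generalize hG : Complex.exp (w * ((harmonic m : ℂ))) = G
    generalize hFc : (m.factorial : ℂ) = F
    generalize hq1 : P a m = q1
    generalize hq2 : P (1 - a) m = q2
    generalize hq3 : P (1 - b) m = q3
    generalize hq4 : P (1 + b) m = q4
    have hX0 : X ≠ 0 := by rw [← hX]; exact Complex.exp_ne_zero _
    have hY0 : Y ≠ 0 := by rw [← hY]; exact Complex.exp_ne_zero _
    have hZ0 : Z ≠ 0 := by rw [← hZ]; exact Complex.exp_ne_zero _
    have hW0 : W ≠ 0 := by rw [← hW]; exact Complex.exp_ne_zero _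
    have hF0 : F ≠ 0 := by rw [← hFc]; exact hF
    have hq10 : q1 ≠ 0 := by rw [← hq1]; exact hPa m
    have hq20 : q2 ≠ 0 := by rw [← hq2]; exact hP1a m
    have hq30 : q3 ≠ 0 := by rw [← hq3]; exact hP1b m
    have hq40 : q4 ≠ 0 := by rw [← hq4]; exact hPb m
    have r1 : X * F / q1 / (Y * F / q2) = X / Y * q2 / q1 := by
      rw [div_div_div_comm, mul_div_mul_comm, div_self hF0, mul_one, div_div_eq_mul_div]
    have r2 : Z * F / q3 / (W * F / q4) = Z / W * q4 / q3 := by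
      rw [div_div_div_comm, mul_div_mul_comm, div_self hF0, mul_one, div_div_eq_mul_div]
    rw [r1, r2]
    field_simp [hX0, hY0, hZ0, hW0, hq10, hq20, hq30, hq40]
  -- nonvanishing of the Gamma factors
  have hG1a : Complex.Gamma (1 - a) ≠ 0 :=
    Complex.Gamma_ne_zero fun m h => haZ ((m : ℤ) + 1) (by push_cast; linear_combination -h)
  have hGb : Complex.Gamma (1 + b) ≠ 0 :=
    Complex.Gamma_ne_zero fun m h => hbZ (-(m : ℤ) - 1) (by push_cast; linear_combination h)
  -- the limit
  have hreal : Tendsto (fun n : ℕ =>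
      ((harmonic n : ℝ) - Real.log n - Real.eulerMascheroniConstant)) atTop (𝓝 0) := by
    have := Real.tendsto_harmonic_sub_log.sub
      (tendsto_const_nhds (x := Real.eulerMascheroniConstant))
    simpa using this
  have hexp1 : Tendsto (fun m : ℕ => Complex.exp (w * (((harmonic m : ℂ)) -
      ((Real.log m : ℝ) : ℂ) - (Real.eulerMascheroniConstant : ℂ)))) atTop (𝓝 1) := by
    have h1 : Tendsto (fun n : ℕ =>
        ((((harmonic n : ℝ) - Real.log n - Real.eulerMascheroniConstant : ℝ)) : ℂ)) atTop
        (𝓝 0) := by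
      have := (Complex.continuous_ofReal.tendsto 0).comp hreal
      simpa [Function.comp_def] using this
    have h2 : Tendsto (fun n : ℕ => w *
        ((((harmonic n : ℝ) - Real.log n - Real.eulerMascheroniConstant : ℝ)) : ℂ)) atTop
        (𝓝 0) := by
      simpa using h1.const_mul w
    have h3 := (Complex.continuous_exp.tendsto 0).comp h2
    simp only [Function.comp_def, Complex.exp_zero] at h3
    apply h3.congr
    intro n
    congr 1
    push_cast
    ring
  have hTend : Tendsto (fun m : ℕ =>
      u * (GammaSeq a m / GammaSeq (1 - a) m) * (GammaSeq (1 - b) m / GammaSeq (1 + b) m) *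
        Complex.exp (w * (((harmonic m : ℂ)) - ((Real.log m : ℝ) : ℂ) -
          (Real.eulerMascheroniConstant : ℂ)))) atTop
      (𝓝 (u * (Complex.Gamma a / Complex.Gamma (1 - a)) *
        (Complex.Gamma (1 - b) / Complex.Gamma (1 + b)) * 1)) :=
    ((tendsto_const_nhds.mul ((Complex.GammaSeq_tendsto_Gamma a).div
        (Complex.GammaSeq_tendsto_Gamma (1 - a)) hG1a)).mul
      ((Complex.GammaSeq_tendsto_Gamma (1 - b)).div
        (Complex.GammaSeq_tendsto_Gamma (1 + b)) hGb)).mul hexp1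
  have hval : u * (Complex.Gamma a / Complex.Gamma (1 - a)) *
      (Complex.Gamma (1 - b) / Complex.Gamma (1 + b)) * 1
      = u * Complex.Gamma a * Complex.Gamma (1 - b) /
        (Complex.Gamma (1 - a) * Complex.Gamma (1 + b)) := by
    field_simp
    try ring
  rw [hval] at hTend
  apply (tendsto_add_atTop_iff_nat 1).mp
  refine Tendsto.congr' ?_ hTend
  filter_upwards [eventually_ge_atTop 1] with m hm
  exact (key2 m hm).symm
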